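/- Let i = (i_1,…,i_k) be a multi-index with |i| = i_1 + ⋯ + i_k and let u ∈ K[x_0,…,x_n]. Then the induced map σ* on exterior powers of Kähler differentials satisfies σ*(ω(S, y^i u)) = ((−1)^k (|i|+k−1)!)/(i_1!⋯i_k!·(k−1)!·k^{|i|}) · β(S, y^i u), where ω(S, y^i u) := (−1)^{|i|+k−1}·((|i|+k−1)!/(k−1)!)·(G_1⋯G_k)^{−1}·(y^i u / S^{|i|})·Ω_x and β(S, y^i u) := (−1)^{|i|+1}·i_1!⋯i_k!·(u/(G_1^{i_1+1}⋯G_k^{i_k+1}))·Ω_x. -/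

import Mathlib

/-!
Since `σ` fixes the `x_j` and sends `y_λ` to `1/G_λ`, it sends `S` to `∑ G_λ/G_λ = k`, `y^i` to
`∏ G_λ^{-i_λ}`, and, being compatible with `d`, it sends `Ω_x` to `Ω_x`. Hence `σ*(ω(S, y^i u))` is
`(−1)^{|i|+k−1} (|i|+k−1)!/((k−1)! k^{|i|}) · u/∏ G_λ^{i_λ+1} · Ω_x`, and the theorem reduces to an
identity between rational constants.
-/

open MvPolynomial

set_option maxHeartbeats 1000000
set_option synthInstance.maxHeartbeats 1000000

noncomputable section

/-- The polynomial ring `A = K[y_1,…,y_k,x_0,…,x_n]`, with variables indexed by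
`Fin k ⊕ Fin (n+1)` (`Sum.inl` = the `y` variables, `Sum.inr` = the `x` variables). -/
abbrev PolyA (K : Type) [Field K] (n k : ℕ) : Type :=
  MvPolynomial (Fin k ⊕ Fin (n+1)) K

/-- The Dwork potential `S = ∑ y_l G_l`. -/
def dworkS (K : Type) [Field K] (n k : ℕ) (G : Fin k → MvPolynomial (Fin (n+1)) K) :
    PolyA K n k :=
  ∑ l : Fin k, X (Sum.inl l) * rename Sum.inr (G l)

/-- `R`: the localization of `A` at `G_1⋯G_k·S`. -/
abbrev LocR (K : Type) [Field K] (n k : ℕ) (G : Fin k → MvPolynomial (Fin (n+1)) K) : Type :=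
  Localization.Away ((rename Sum.inr (∏ l : Fin k, G l)) * dworkS K n k G)

/-- `B'`: the localization of `K[x_0,…,x_n]` at `G_1⋯G_k`. -/
abbrev LocB (K : Type) [Field K] (n : ℕ) {k : ℕ} (G : Fin k → MvPolynomial (Fin (n+1)) K) :
    Type :=
  Localization.Away (∏ l : Fin k, G l)

variable (K : Type) [Field K] [CharZero K] (n k : ℕ) (G : Fin k → MvPolynomial (Fin (n+1)) K)

/-- `Ω_x = ∑_{j=0}^n (−1)^j x_j dx_0 ∧ ⋯ ∧ \hat{dx_j} ∧ ⋯ ∧ dx_n` in the exterior algebra of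
`Ω^1_{R/K}`. -/
def OmegaXR : ExteriorAlgebra (LocR K n k G) (Ω[(LocR K n k G)⁄K]) :=
  ∑ i : Fin (n+1),
    (((-1 : LocR K n k G) ^ (i : ℕ)) *
        algebraMap (PolyA K n k) _ (X (Sum.inr i))) •
      ((List.ofFn fun j : Fin (n+1) => ExteriorAlgebra.ι (LocR K n k G)
          (KaehlerDifferential.D K (LocR K n k G)
            (algebraMap (PolyA K n k) _ (X (Sum.inr j))))).eraseIdx i).prod

/-- `Ω_x` in the exterior algebra of `Ω^1_{B'/K}`. -/
def OmegaXB : ExteriorAlgebra (LocB K n G) (Ω[(LocB K n G)⁄K]) :=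
  ∑ i : Fin (n+1),
    (((-1 : LocB K n G) ^ (i : ℕ)) *
        algebraMap (MvPolynomial (Fin (n+1)) K) _ (X i)) •
      ((List.ofFn fun j : Fin (n+1) => ExteriorAlgebra.ι (LocB K n G)
          (KaehlerDifferential.D K (LocB K n G)
            (algebraMap (MvPolynomial (Fin (n+1)) K) _ (X j)))).eraseIdx i).prod

theorem RingHom.map_smul_of_map_algebraMap {R S A B : Type*} [CommSemiring R] [CommSemiring S]
    [Semiring A] [Semiring B] [Algebra R A] [Algebra S B] (σ : R →+* S) (Φ : A →+* B)
    (hΦ : ∀ r, Φ (algebraMap R A r) = algebraMap S B (σ r)) (r : R) (a : A) :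
    Φ (r • a) = σ r • Φ a := by
  rw [Algebra.smul_def, map_mul, hΦ, Algebra.smul_def]

theorem neg_one_pow_mul_factorial_div_mul_inv_pow {F : Type*} [Field F] [CharZero F] {k : ℕ}
    (hk : 1 ≤ k) (m : ℕ) {P : F} (hP : P ≠ 0) :
    (-1) ^ (m + k - 1) * ((m + k - 1).factorial : F) / ((k - 1).factorial : F) * (k : F)⁻¹ ^ m =
      (-1) ^ k * ((m + k - 1).factorial : F) / (P * (k - 1).factorial * (k : F) ^ m) *
        ((-1) ^ (m + 1) * P) := by
  obtain ⟨j, rfl⟩ : ∃ j, k = j + 1 := ⟨k - 1, by omega⟩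
  have hk0 : ((j + 1 : ℕ) : F) ≠ 0 := Nat.cast_ne_zero.mpr j.succ_ne_zero
  rw [show m + (j + 1) - 1 = m + j by omega, Nat.add_sub_cancel, inv_pow]
  field_simp
  ring

section Sigma

-- Rebinding `K` keeps the ambient `[CharZero K]` out of the lemmas of this section.
variable {K : Type} [Field K] {n k : ℕ} {G : Fin k → MvPolynomial (Fin (n+1)) K}

theorem map_omegaXR_eq_omegaXB {σ : LocR K n k G →+* LocB K n G}
    (hσx : ∀ j, σ (algebraMap (PolyA K n k) _ (X (Sum.inr j))) =
      algebraMap (MvPolynomial (Fin (n+1)) K) _ (X j))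
    {Φ : ExteriorAlgebra (LocR K n k G) (Ω[(LocR K n k G)⁄K]) →+*
      ExteriorAlgebra (LocB K n G) (Ω[(LocB K n G)⁄K])}
    (hΦalg : ∀ r : LocR K n k G,
      Φ (algebraMap (LocR K n k G) _ r) = algebraMap (LocB K n G) _ (σ r))
    (hΦd : ∀ r : LocR K n k G,
      Φ (ExteriorAlgebra.ι _ (KaehlerDifferential.D K (LocR K n k G) r)) =
        ExteriorAlgebra.ι _ (KaehlerDifferential.D K (LocB K n G) (σ r))) :
    Φ (OmegaXR K n k G) = OmegaXB K n k G := by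
  rw [OmegaXR, OmegaXB, map_sum]
  refine Finset.sum_congr rfl fun j _ => ?_
  rw [RingHom.map_smul_of_map_algebraMap σ Φ hΦalg, map_mul, map_pow, map_neg, map_one, hσx,
    map_list_prod, ← List.eraseIdx_map, List.map_ofFn]
  congr 3
  refine congrArg List.ofFn (funext fun j' => ?_)
  rw [Function.comp_apply, hΦd, hσx]

variable {Ginv : Fin k → LocB K n G} {σ : LocR K n k G →+* LocB K n G}
  (hσ : ∀ a : PolyA K n k, σ (algebraMap (PolyA K n k) _ a) =
      aeval (Sum.elim Ginv (fun j => algebraMap (MvPolynomial (Fin (n+1)) K) _ (X j))) a)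
include hσ

theorem sigma_algebraMap_rename_inr (p : MvPolynomial (Fin (n+1)) K) :
    σ (algebraMap (PolyA K n k) _ (rename Sum.inr p)) = algebraMap _ (LocB K n G) p := by
  rw [hσ, aeval_rename, Sum.elim_comp_inr, ← IsScalarTower.coe_toAlgHom' K, ← comp_aeval_apply,
    aeval_X_left_apply]

theorem sigma_algebraMap_X_inl (l : Fin k) :
    σ (algebraMap (PolyA K n k) _ (X (Sum.inl l))) = Ginv l := by
  rw [hσ, aeval_X, Sum.elim_inl]

theorem sigma_algebraMap_scalar (c : K) :
    σ (algebraMap K (LocR K n k G) c) = algebraMap K _ c := by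
  rw [IsScalarTower.algebraMap_apply K (PolyA K n k), hσ, algebraMap_eq, aeval_C]

theorem sigma_algebraMap_dworkS
    (hGinv : ∀ l, algebraMap (MvPolynomial (Fin (n+1)) K) _ (G l) * Ginv l = 1) :
    σ (algebraMap (PolyA K n k) _ (dworkS K n k G)) = k := by
  simp only [dworkS, map_sum, map_mul, sigma_algebraMap_X_inl hσ, sigma_algebraMap_rename_inr hσ,
    mul_comm (Ginv _), hGinv, Finset.sum_const, Finset.card_univ, Fintype.card_fin, nsmul_one]

end Sigma

/-- `σ*` is modelled by any ring homomorphism `Φ` of exterior algebras compatible with `σ` on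
scalars and with `ι ∘ D`; these properties characterize the map induced on exterior powers of
Kähler differentials. -/
theorem sigma_star_omega_eq_beta
    (hk : 1 ≤ k)
    (i : Fin k → ℕ) (u : MvPolynomial (Fin (n+1)) K)
    -- the inverses `1/G_λ` in `B'`
    (Ginv : Fin k → LocB K n G)
    (hGinv : ∀ l, algebraMap (MvPolynomial (Fin (n+1)) K) _ (G l) * Ginv l = 1)
    -- the inverses `(G_1⋯G_k)⁻¹` and `S⁻¹` in `R`
    (PGinv : LocR K n k G)
    (hPGinv : algebraMap (PolyA K n k) _ (rename Sum.inr (∏ l : Fin k, G l)) * PGinv = 1)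
    (Sinv : LocR K n k G)
    (hSinv : algebraMap (PolyA K n k) _ (dworkS K n k G) * Sinv = 1)
    -- the map `σ : R → B'`, `x_j ↦ x_j`, `y_λ ↦ 1/G_λ`
    (σ : LocR K n k G →+* LocB K n G)
    (hσ : ∀ a : PolyA K n k, σ (algebraMap (PolyA K n k) _ a) =
      aeval (Sum.elim Ginv (fun j => algebraMap (MvPolynomial (Fin (n+1)) K) _ (X j))) a)
    -- the induced map `σ*` on the exterior algebras of Kähler differentials
    (Φ : ExteriorAlgebra (LocR K n k G) (Ω[(LocR K n k G)⁄K]) →+*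
      ExteriorAlgebra (LocB K n G) (Ω[(LocB K n G)⁄K]))
    (hΦalg : ∀ r : LocR K n k G,
      Φ (algebraMap (LocR K n k G) _ r) = algebraMap (LocB K n G) _ (σ r))
    (hΦd : ∀ r : LocR K n k G,
      Φ (ExteriorAlgebra.ι _ (KaehlerDifferential.D K (LocR K n k G) r)) =
        ExteriorAlgebra.ι _ (KaehlerDifferential.D K (LocB K n G) (σ r))) :
    Φ ((algebraMap K (LocR K n k G)
          (((-1 : K) ^ ((∑ l, i l) + k - 1)) *
            (Nat.factorial ((∑ l, i l) + k - 1) : K) / (Nat.factorial (k - 1) : K)) *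
        PGinv *
        algebraMap (PolyA K n k) _
          ((∏ l : Fin k, X (Sum.inl l) ^ i l) * rename Sum.inr u) *
        Sinv ^ (∑ l, i l)) • OmegaXR K n k G)
    = (algebraMap K (LocB K n G)
          ((((-1 : K) ^ k) * (Nat.factorial ((∑ l, i l) + k - 1) : K)) /
            (((∏ l : Fin k, Nat.factorial (i l) : ℕ) : K) *
              (Nat.factorial (k - 1) : K) * (k : K) ^ (∑ l, i l))) *
        (((-1 : LocB K n G) ^ ((∑ l, i l) + 1)) *
          ((∏ l : Fin k, Nat.factorial (i l) : ℕ) : LocB K n G) *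
          algebraMap (MvPolynomial (Fin (n+1)) K) _ u *
          ∏ l : Fin k, Ginv l ^ (i l + 1))) • OmegaXB K n k G := by
  set m := ∑ l, i l
  have hσSinv : σ Sinv = algebraMap K _ (k : K)⁻¹ := by
    refine (left_inv_eq_right_inv (a := (k : LocB K n G)) ?_ ?_).symm
    · rw [← map_natCast (algebraMap K (LocB K n G)), ← map_mul,
        inv_mul_cancel₀ (Nat.cast_ne_zero.mpr (by omega)), map_one]
    · rw [← sigma_algebraMap_dworkS hσ hGinv, ← map_mul, hSinv, map_one]
  have hσPGinv : σ PGinv = ∏ l, Ginv l := by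
    refine (left_inv_eq_right_inv (a := algebraMap _ (LocB K n G) (∏ l, G l)) ?_ ?_).symm
    · rw [map_prod, ← Finset.prod_mul_distrib]
      exact Finset.prod_eq_one fun l _ => (mul_comm _ _).trans (hGinv l)
    · rw [← sigma_algebraMap_rename_inr hσ, ← map_mul, hPGinv, map_one]
  have hσmonomial : σ (algebraMap (PolyA K n k) _
      ((∏ l : Fin k, X (Sum.inl l) ^ i l) * rename Sum.inr u)) =
        (∏ l, Ginv l ^ i l) * algebraMap _ _ u := by
    simp only [map_mul, map_prod, map_pow, sigma_algebraMap_X_inl hσ,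
      sigma_algebraMap_rename_inr hσ]
  have hscalar := congrArg (algebraMap K (LocB K n G))
    (neg_one_pow_mul_factorial_div_mul_inv_pow (F := K) hk m
      (P := ((∏ l : Fin k, Nat.factorial (i l) : ℕ) : K))
      (Nat.cast_ne_zero.mpr (Finset.prod_ne_zero_iff.mpr fun l _ => (i l).factorial_ne_zero)))
  rw [RingHom.map_smul_of_map_algebraMap σ Φ hΦalg, map_omegaXR_eq_omegaXB
    (fun j => by rw [← rename_X, sigma_algebraMap_rename_inr hσ]) hΦalg hΦd]
  congr 1
  rw [map_mul, map_mul, map_mul, map_pow, sigma_algebraMap_scalar hσ, hσPGinv, hσmonomial,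
    hσSinv, Finset.prod_congr rfl fun l _ => pow_succ' (Ginv l) (i l), Finset.prod_mul_distrib]
  simp only [map_mul, map_pow, map_neg, map_one, map_natCast] at hscalar
  linear_combination ((∏ l, Ginv l) * (∏ l, Ginv l ^ i l) * algebraMap _ _ u) * hscalar
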